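/- arXiv:2306.07707 — 4 statements merged into one kernel-verified Lean document; each statement's English description precedes it below -/
import Mathlib

section
/- For any DAG G, the 1-influential set can be ordered as i_1 ≻ i_2 ≻ … ≻ i_m where i_1 is the agent with the highest rank (largest progeny, ties broken by larger index) and for each t < m, agent i_{t+1} belongs to the progeny of i_t (excluding i_t itself). -/
attribute [local instance] Classical.propDecidable

/-- The progeny of node `i`: all nodes with a directed path to `i`, including `i`. -/
noncomputable def progeny {n : ℕ} (E : Finset (Fin n × Fin n)) (i : Fin n) : Finset (Fin n) :=
  Finset.univ.filter (fun j => Relation.ReflTransGen (fun u v => (u, v) ∈ E) j i)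

/-- The graph is acyclic. -/
def Acyclic {n : ℕ} (E : Finset (Fin n × Fin n)) : Prop :=
  ∀ i : Fin n, ¬ Relation.TransGen (fun u v => (u, v) ∈ E) i i

/-- `Prec E i j` means `i ≻ j` : larger progeny, ties broken by larger index. -/
def Prec {n : ℕ} (E : Finset (Fin n × Fin n)) (i j : Fin n) : Prop :=
  (progeny E j).card < (progeny E i).card ∨
    ((progeny E j).card = (progeny E i).card ∧ j < i)

/-- Delete all out-edges of node `i`. -/
noncomputable def delOut {n : ℕ} (E : Finset (Fin n × Fin n)) (i : Fin n) :
    Finset (Fin n × Fin n) := E.filter (fun e => e.1 ≠ i)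

/-- `i` is in the `k`-influential set: fewer than `k` nodes outrank `i`
after `i` deletes all her out-edges. -/
noncomputable def Influential {n : ℕ} (k : ℕ) (E : Finset (Fin n × Fin n)) (i : Fin n) : Prop :=
  (Finset.univ.filter (fun j => Prec (delOut E i) j i)).card < k

/-!
Rank nodes by the key `(|P(i)|, i)` in lexicographic order, so that `≻` is a strict linear
order. Deleting the out-edges of `j` can only shrink progenies, leaves `P(j)` unchanged
(acyclicity), and leaves `P(i)` unchanged unless `j ∈ P(i)`. Hence the top-ranked node is
1-influential, and if `i ≻ j` with `j` 1-influential then `j ∈ P(i)`: otherwise `i` would still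
outrank `j` after the deletion. Listing the 1-influential set in decreasing rank therefore gives
the required chain.
-/

open Relation OrderDual

theorem Finset.exists_enum_strictAnti {α β : Type*} [LinearOrder β] (s : Finset α)
    {k : α → β} (hk : Set.InjOn k s) :
    ∃ f : Fin s.card → α, (∀ a, a ∈ s ↔ ∃ t, f t = a) ∧ StrictAnti (k ∘ f) := by
  set T := s.image (toDual ∘ k)
  have hT : T.card = s.card :=
    card_image_of_injOn fun a ha b hb h => hk ha hb (toDual.injective h)
  have hfT : ∀ t, ∃ a ∈ s, toDual (k a) = T.orderEmbOfFin hT t := fun t =>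
    mem_image.1 (T.orderEmbOfFin_mem hT t)
  choose f hfs hfk using hfT
  refine ⟨f, fun a => ⟨fun ha => ?_, ?_⟩, fun t u htu => ?_⟩
  · have haT : toDual (k a) ∈ Set.range (T.orderEmbOfFin hT) := by
      rw [range_orderEmbOfFin]
      exact mem_image_of_mem _ ha
    obtain ⟨t, ht⟩ := haT
    exact ⟨t, hk (hfs t) ha (toDual.injective ((hfk t).trans ht))⟩
  · rintro ⟨t, rfl⟩
    exact hfs t
  · have := (T.orderEmbOfFin hT).strictMono htu
    rwa [← hfk, ← hfk, toDual_lt_toDual] at this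

section

variable {n : ℕ} (E : Finset (Fin n × Fin n))

theorem mem_progeny {i j : Fin n} :
    j ∈ progeny E i ↔ ReflTransGen (fun u v => (u, v) ∈ E) j i := by
  simp [progeny]

theorem mem_delOut {i u v : Fin n} : (u, v) ∈ delOut E i ↔ (u, v) ∈ E ∧ u ≠ i := by
  simp [delOut]

noncomputable def rankKey (i : Fin n) : ℕ ×ₗ Fin n := toLex ((progeny E i).card, i)

theorem prec_iff_rankKey_lt {i j : Fin n} : Prec E i j ↔ rankKey E j < rankKey E i := by
  simp [Prec, rankKey, Prod.Lex.toLex_lt_toLex]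

theorem rankKey_injective : Function.Injective (rankKey E) :=
  fun _ _ h => congrArg (fun p => (ofLex p).2) h

theorem prec_irrefl (i : Fin n) : ¬ Prec E i i := by
  simp [prec_iff_rankKey_lt]

theorem progeny_delOut_subset (i j : Fin n) : progeny (delOut E i) j ⊆ progeny E j := by
  intro k hk
  rw [mem_progeny] at hk ⊢
  exact ReflTransGen.mono (fun u v huv => ((mem_delOut E).1 huv).1) _ _ hk

theorem progeny_delOut_of_not_transGen {i j : Fin n}
    (h : ¬ TransGen (fun u v => (u, v) ∈ E) j i) : progeny (delOut E j) i = progeny E i := by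
  refine (progeny_delOut_subset E j i).antisymm fun k hk => ?_
  rw [mem_progeny] at hk ⊢
  induction hk using ReflTransGen.head_induction_on with
  | refl => exact ReflTransGen.refl
  | @head a c hac hci ih =>
    by_cases ha : a = j
    · subst ha
      exact absurd (TransGen.head' hac hci) h
    · exact ReflTransGen.head ((mem_delOut E).2 ⟨hac, ha⟩) ih

theorem progeny_delOut_self {E : Finset (Fin n × Fin n)} (hE : Acyclic E) (i : Fin n) :
    progeny (delOut E i) i = progeny E i :=
  progeny_delOut_of_not_transGen E (hE i)

theorem rankKey_delOut_le (i j : Fin n) : rankKey (delOut E i) j ≤ rankKey E j :=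
  Prod.Lex.toLex_mono ⟨Finset.card_le_card (progeny_delOut_subset E i j), le_rfl⟩

theorem influential_one_iff (i : Fin n) :
    Influential 1 E i ↔ ∀ j, ¬ Prec (delOut E i) j i := by
  simp [Influential, Finset.filter_eq_empty_iff]

variable {E}

theorem influential_one_of_forall_rankKey_le (hE : Acyclic E) {g : Fin n}
    (hg : ∀ j, rankKey E j ≤ rankKey E g) : Influential 1 E g := by
  refine (influential_one_iff E g).2 fun j hj => ?_
  have hgj : rankKey E g < rankKey (delOut E g) j := by
    rwa [prec_iff_rankKey_lt, rankKey, progeny_delOut_self hE] at hj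
  exact (hgj.trans_le ((rankKey_delOut_le E g j).trans (hg j))).false

theorem mem_progeny_of_influential_of_prec (hE : Acyclic E) {i j : Fin n}
    (hj : Influential 1 E j) (hij : Prec E i j) : j ∈ progeny E i := by
  by_contra hji
  have hpath : ¬ TransGen (fun u v => (u, v) ∈ E) j i :=
    fun h => hji ((mem_progeny E).2 h.to_reflTransGen)
  refine (influential_one_iff E j).1 hj i ?_
  simpa only [Prec, progeny_delOut_of_not_transGen E hpath, progeny_delOut_self hE] using hij

end

/-- the 1-influential set can be ordered i₁ ≻ i₂ ≻ … ≻ i_m with i₁ the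
top-ranked agent of the whole graph and i_{t+1} ∈ P(i_t) \ {i_t} for all t < m. -/
theorem stmt0 {n : ℕ} (hn : 1 ≤ n) (E : Finset (Fin n × Fin n)) (hE : Acyclic E) :
    ∃ m : ℕ, ∃ _ : 1 ≤ m, ∃ f : Fin m → Fin n,
      (∀ i : Fin n, Influential 1 E i ↔ ∃ t : Fin m, f t = i) ∧
      (∀ t s : Fin m, t < s → Prec E (f t) (f s)) ∧
      (∀ j : Fin n, j ≠ f ⟨0, by omega⟩ → Prec E (f ⟨0, by omega⟩) j) ∧
      (∀ t : Fin m, ∀ h : (t : ℕ) + 1 < m,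
        f ⟨(t : ℕ) + 1, h⟩ ∈ progeny E (f t) ∧ f ⟨(t : ℕ) + 1, h⟩ ≠ f t) := by
  obtain ⟨g, -, hg⟩ :=
    Finset.exists_max_image Finset.univ (rankKey E) ⟨⟨0, hn⟩, Finset.mem_univ _⟩
  have hgS : Influential 1 E g :=
    influential_one_of_forall_rankKey_le hE fun j => hg j (Finset.mem_univ j)
  set S := Finset.univ.filter (Influential 1 E)
  obtain ⟨f, hfS, hf⟩ := S.exists_enum_strictAnti (rankKey_injective E).injOn
  have hmem : ∀ i, Influential 1 E i ↔ ∃ t, f t = i := fun i => by simpa [S] using hfS i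
  have hm : 1 ≤ S.card := Finset.card_pos.2 ⟨g, by simpa [S] using hgS⟩
  refine ⟨S.card, hm, f, hmem, fun t s hts => (prec_iff_rankKey_lt E).2 (hf hts), ?_, ?_⟩
  · intro j hj
    obtain ⟨t, rfl⟩ := (hmem g).1 hgS
    have hj0 : rankKey E j ≤ rankKey E (f ⟨0, hm⟩) :=
      (hg j (Finset.mem_univ j)).trans (hf.antitone (Fin.le_def.2 t.val.zero_le))
    exact (prec_iff_rankKey_lt E).2 (hj0.lt_of_ne fun h => hj (rankKey_injective E h))
  · intro t h
    have hprec : Prec E (f t) (f ⟨t + 1, h⟩) :=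
      (prec_iff_rankKey_lt E).2 (hf (Fin.lt_def.2 (Nat.lt_succ_self _)))
    exact ⟨mem_progeny_of_influential_of_prec hE ((hmem _).2 ⟨_, rfl⟩) hprec,
      fun heq => prec_irrefl E _ (heq ▸ hprec)⟩
end

section
/- For real numbers p_1 ≥ p_2 ≥ … ≥ p_m > 0 with 2·p_t ≥ p_1 for all t ≥ 2, and any β with 1/2 ≤ β ≤ 1, the quantity (1/p_1)·[β·p_m + (1−β)·Σ_{t=1}^{m−1} p_t·log₂(p_t/p_{t+1})] is at least min{(1/2)(β + (1−β)/ln 2), β}. -/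
/-!
Each summand dominates a difference: `log (a / b) ≥ 1 - b / a` gives
`p_t log₂ (p_t / p_{t+1}) ≥ (p_t - p_{t+1}) / ln 2`, so the sum telescopes to at least
`(p_1 - p_m) / ln 2`. With `x = p_m / p_1 ∈ [1/2, 1]` the normalized quantity is then at least
`β x + (1 - β)(1 - x) / ln 2`, which is affine in `x` and hence bounded below by the smaller
of its values at `x = 1/2` and `x = 1`.
-/

open Real Finset

theorem le_apply_zero_of_succ_le {α : Type*} [Preorder α] {f : ℕ → α} {m : ℕ}
    (hf : ∀ t, t + 1 < m → f (t + 1) ≤ f t) : ∀ t, t < m → f t ≤ f 0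
  | 0, _ => le_rfl
  | t + 1, ht => (hf t ht).trans (le_apply_zero_of_succ_le hf t (by omega))

theorem sub_div_log_le_mul_logb {B a b : ℝ} (hB : 1 < B) (ha : 0 < a) (hb : 0 < b) :
    (a - b) / log B ≤ a * logb B (a / b) := by
  have hlog : 1 - b / a ≤ log (a / b) := by
    simpa only [inv_div] using one_sub_inv_le_log_of_pos (div_pos ha hb)
  rw [logb, mul_div_assoc', div_le_div_iff_of_pos_right (log_pos hB)]
  calc a - b = a * (1 - b / a) := by field_simp
    _ ≤ a * log (a / b) := by gcongr

theorem sub_div_log_le_sum_mul_logb {B : ℝ} (hB : 1 < B) {p : ℕ → ℝ} {n : ℕ}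
    (hp : ∀ t, t ≤ n → 0 < p t) :
    (p 0 - p n) / log B ≤ ∑ t ∈ range n, p t * logb B (p t / p (t + 1)) := by
  rw [← sum_range_sub' p, sum_div]
  refine sum_le_sum fun t ht => ?_
  have ht : t < n := mem_range.mp ht
  exact sub_div_log_le_mul_logb hB (hp t ht.le) (hp (t + 1) ht)

theorem min_le_affine_of_mem_Icc {β γ x : ℝ} (hx : 1 / 2 ≤ x) (hx1 : x ≤ 1) :
    min ((1 / 2) * (β + γ)) β ≤ β * x + γ * (1 - x) := by
  rcases le_total β γ with h | h
  · exact (min_le_right _ _).trans (by nlinarith)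
  · exact (min_le_left _ _).trans (by nlinarith)

/-- `p` is indexed from `0`: the paper's `p_t` is `p (t - 1)`. -/
theorem stmt4_general (m : ℕ) (hm : 1 ≤ m) (p : ℕ → ℝ)
    (hpos : ∀ t, t < m → 0 < p t)
    (hmono : ∀ t, t + 1 < m → p (t + 1) ≤ p t)
    (h2 : ∀ t, 1 ≤ t → t < m → p 0 ≤ 2 * p t)
    (β : ℝ) (hβ1 : β ≤ 1) :
    min ((1 / 2) * (β + (1 - β) / Real.log 2)) β ≤
      (1 / p 0) * (β * p (m - 1) +
        (1 - β) * ∑ t ∈ Finset.range (m - 1), p t * Real.logb 2 (p t / p (t + 1))) := by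
  obtain ⟨n, rfl⟩ : ∃ n, m = n + 1 := ⟨m - 1, by omega⟩
  rw [Nat.add_sub_cancel]
  have hp0 : 0 < p 0 := hpos 0 (by omega)
  have hpn_le : p n ≤ p 0 := le_apply_zero_of_succ_le hmono n (by omega)
  have hp0_le : p 0 ≤ 2 * p n := by
    rcases Nat.eq_zero_or_pos n with rfl | hn
    · linarith
    · exact h2 n hn (by omega)
  have hx : 1 / 2 ≤ p n / p 0 := by rw [le_div_iff₀ hp0]; linarith
  have hx1 : p n / p 0 ≤ 1 := (div_le_one hp0).mpr hpn_le
  calc min ((1 / 2) * (β + (1 - β) / log 2)) β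
      ≤ β * (p n / p 0) + (1 - β) / log 2 * (1 - p n / p 0) := min_le_affine_of_mem_Icc hx hx1
    _ = (1 / p 0) * (β * p n + (1 - β) * ((p 0 - p n) / log 2)) := by field_simp
    _ ≤ _ := by
      have hβ' : 0 ≤ 1 - β := by linarith
      gcongr
      exact sub_div_log_le_sum_mul_logb one_lt_two fun t ht => hpos t (by omega)

/-- lower bound on the expected normalized progeny of the β-logarithmic
mechanism (p indexed from 0; the paper's p_t is `p (t-1)`). -/
theorem stmt4 (m : ℕ) (hm : 1 ≤ m) (p : ℕ → ℝ)
    (hpos : ∀ t, t < m → 0 < p t)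
    (hmono : ∀ t, t + 1 < m → p (t + 1) ≤ p t)
    (h2 : ∀ t, 1 ≤ t → t < m → p 0 ≤ 2 * p t)
    (β : ℝ) (hβ : 1 / 2 ≤ β) (hβ1 : β ≤ 1) :
    min ((1 / 2) * (β + (1 - β) / Real.log 2)) β ≤
      (1 / p 0) * (β * p (m - 1) +
        (1 - β) * ∑ t ∈ Finset.range (m - 1), p t * Real.logb 2 (p t / p (t + 1))) :=
  stmt4_general m hm p hpos hmono h2 β hβ1
end

section
/- For any DAG G, the last agent i_m of the 2-influential set (the one with lowest rank in the set) satisfies 2·|P(i_m)| ≥ |P(i₂*)|, where i₂* is the node of rank 2 in G. -/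
attribute [local instance] Classical.propDecidable

/-
Deleting the out-edges of `i` only cuts the paths that pass through `i`, so every node `j`
keeps at least `|P(j)| - |P(i)|` of its progeny while `i` keeps at most `|P(i)|`. Hence any node
whose progeny exceeds `2 |P(i)|` still outranks `i` afterwards. If `|P(i₂*)| > 2 |P(i_m)|`, both
`i₁*` and `i₂*` would outrank `i_m` after the deletion, contradicting `i_m ∈ S₂(G)`.
-/

lemma progeny_mono {n : ℕ} {E E' : Finset (Fin n × Fin n)} (h : E' ⊆ E) (j : Fin n) :
    progeny E' j ⊆ progeny E j := by
  intro u hu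
  simp only [progeny, Finset.mem_filter, Finset.mem_univ, true_and] at hu ⊢
  exact Relation.ReflTransGen.mono (fun _ _ hab => h hab) _ _ hu

lemma reflTransGen_delOut_of_not_reflTransGen {n : ℕ} (E : Finset (Fin n × Fin n))
    {i j u : Fin n} (h : Relation.ReflTransGen (fun a b => (a, b) ∈ E) u j)
    (hui : ¬ Relation.ReflTransGen (fun a b => (a, b) ∈ E) u i) :
    Relation.ReflTransGen (fun a b => (a, b) ∈ delOut E i) u j := by
  induction h using Relation.ReflTransGen.head_induction_on with
  | refl => exact .refl
  | @head a b hab _ ih =>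
    have hai : a ≠ i := by rintro rfl; exact hui .refl
    exact .head (Finset.mem_filter.mpr ⟨hab, hai⟩) (ih fun hbi => hui (.head hab hbi))

lemma progeny_sdiff_subset_progeny_delOut {n : ℕ} (E : Finset (Fin n × Fin n)) (i j : Fin n) :
    progeny E j \ progeny E i ⊆ progeny (delOut E i) j := by
  intro u hu
  simp only [progeny, Finset.mem_sdiff, Finset.mem_filter, Finset.mem_univ, true_and] at hu ⊢
  exact reflTransGen_delOut_of_not_reflTransGen E hu.1 hu.2

lemma card_progeny_le_card_progeny_delOut_add {n : ℕ} (E : Finset (Fin n × Fin n))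
    (i j : Fin n) :
    (progeny E j).card ≤ (progeny (delOut E i) j).card + (progeny E i).card :=
  calc (progeny E j).card ≤ (progeny E j \ progeny E i).card + (progeny E i).card :=
        Finset.card_le_card_sdiff_add_card
    _ ≤ _ := by gcongr; exact progeny_sdiff_subset_progeny_delOut E i j

lemma prec_delOut_of_two_mul_card_progeny_lt {n : ℕ} (E : Finset (Fin n × Fin n))
    {i j : Fin n} (h : 2 * (progeny E i).card < (progeny E j).card) :
    Prec (delOut E i) j i := by
  have hj := card_progeny_le_card_progeny_delOut_add E i j
  have hi := Finset.card_le_card (progeny_mono (E' := delOut E i) (Finset.filter_subset _ E) i)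
  left
  omega

lemma card_filter_two_mul_card_progeny_lt_of_influential {n k : ℕ}
    {E : Finset (Fin n × Fin n)} {i : Fin n} (hi : Influential k E i) :
    (Finset.univ.filter fun j => 2 * (progeny E i).card < (progeny E j).card).card < k :=
  lt_of_le_of_lt (Finset.card_le_card <| Finset.monotone_filter_right _
    fun _ _ => prec_delOut_of_two_mul_card_progeny_lt E) hi

lemma card_progeny_le_of_prec {n : ℕ} {E : Finset (Fin n × Fin n)} {i j : Fin n}
    (h : Prec E i j) : (progeny E j).card ≤ (progeny E i).card := by
  rcases h with h | ⟨h, _⟩ <;> omega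

theorem stmt12_general {n : ℕ} (E : Finset (Fin n × Fin n))
    (i1 i2 : Fin n) (h12 : i1 ≠ i2)
    (hi1 : ∀ j : Fin n, j ≠ i1 → Prec E i1 j)
    (im : Fin n) (him : Influential 2 E im) :
    (progeny E i2).card ≤ 2 * (progeny E im).card := by
  by_contra! hlt
  have h21 := card_progeny_le_of_prec (hi1 i2 h12.symm)
  have hmem : ∀ j, 2 * (progeny E im).card < (progeny E j).card →
      j ∈ Finset.univ.filter fun j => 2 * (progeny E im).card < (progeny E j).card :=
    fun j hj => Finset.mem_filter.mpr ⟨Finset.mem_univ j, hj⟩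
  have hpair := Finset.card_le_card <| Finset.insert_subset_iff.mpr
    ⟨hmem i1 (by omega), Finset.singleton_subset_iff.mpr (hmem i2 hlt)⟩
  rw [Finset.card_pair h12] at hpair
  have := card_filter_two_mul_card_progeny_lt_of_influential him
  omega

/-- the lowest-ranked agent i_m of the 2-influential set satisfies
2·|P(i_m)| ≥ |P(i₂*)|. -/
theorem stmt12 {n : ℕ} (hn : 2 ≤ n) (E : Finset (Fin n × Fin n)) (hE : Acyclic E)
    (i1 i2 : Fin n) (h12 : i1 ≠ i2)
    (hi1 : ∀ j : Fin n, j ≠ i1 → Prec E i1 j)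
    (hi2 : ∀ j : Fin n, j ≠ i1 → j ≠ i2 → Prec E i2 j)
    (im : Fin n) (him : Influential 2 E im)
    (hlast : ∀ j : Fin n, Influential 2 E j → j ≠ im → Prec E j im) :
    (progeny E i2).card ≤ 2 * (progeny E im).card :=
  stmt12_general E i1 i2 h12 hi1 im him
end

section
/- For positive reals P₁ ≥ P₂ > 0 (interpreted as top two progenies) with ratio ρ = P₂/P₁ ∈ (0,1], the quantity (ρ/2 + 1/(1+ln 2)) / (1 + ρ) is at least (3 + ln 2)/(4(1 + ln 2)). -/
/-! The ratio equals `1/2 + (c - 1/2)/(1 + ρ)` with `c = 1/(1 + ln 2)`, and `c ≥ 1/2` because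
`ln 2 ≤ 1`; so it decreases in `ρ` and its minimum over `(0, 1]` is its value at `ρ = 1`,
which is `(3 + ln 2)/(4(1 + ln 2))`. -/

lemma div_two_le_div_one_add_of_le_one {c ρ : ℝ} (hc : 1 / 2 ≤ c) (hρ : -1 < ρ) (hρ1 : ρ ≤ 1) :
    (1 / 2 + c) / 2 ≤ (ρ / 2 + c) / (1 + ρ) := by
  rw [div_le_div_iff₀ two_pos (by linarith)]
  nlinarith [mul_nonneg (sub_nonneg.2 hc) (sub_nonneg.2 hρ1)]

lemma one_half_le_inv_one_add_log_two : 1 / 2 ≤ 1 / (1 + Real.log 2) := by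
  have hlog : Real.log 2 ≤ 1 := by
    linarith [Real.log_le_sub_one_of_pos (x := 2) two_pos]
  gcongr
  linarith

/-- for ρ ∈ (0,1], (ρ/2 + 1/(1+ln 2))/(1+ρ) ≥ (3+ln 2)/(4(1+ln 2)). -/
theorem stmt15 (ρ : ℝ) (h0 : 0 < ρ) (h1 : ρ ≤ 1) :
    (3 + Real.log 2) / (4 * (1 + Real.log 2)) ≤
      (ρ / 2 + 1 / (1 + Real.log 2)) / (1 + ρ) := by
  have hvalue_at_one :
      (3 + Real.log 2) / (4 * (1 + Real.log 2)) = (1 / 2 + 1 / (1 + Real.log 2)) / 2 := by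
    have : 0 < 1 + Real.log 2 := by positivity
    field_simp
    ring
  rw [hvalue_at_one]
  exact div_two_le_div_one_add_of_le_one one_half_le_inv_one_add_log_two (by linarith) h1
end
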